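/- Let f(t) = Σ_{ℓ=1}^{L} α_ℓ e^{λ_ℓ t} with distinct λ_ℓ ∈ ℂ, none equal to -a, and let l_p be the Laguerre function with parameter a > 0. Then the convolution x(t) = ∫_0^t l_p(τ) f(t-τ) dτ equals Σ_{k=0}^{p} (β_k/k!) t^k e^{-a t} + Σ_{ℓ=1}^{L} γ_ℓ e^{λ_ℓ t}, where γ_ℓ = Σ_{k=0}^{p} α_ℓ b_p(k)/(λ_ℓ+a)^{k+1} and β_k = Σ_{ℓ=1}^{L} Σ_{q=1}^{p-k+1} (-1)^{q-1} α_ℓ b_p(k+q-1)/(-a-λ_ℓ)^q, with b_p(k) = (-1)^{p-k} p! (2a)^{k+1/2}/(k!(p-k)!). -/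
import Mathlib


open MeasureTheory

noncomputable def lag (a : ℝ) (p : ℕ) (t : ℝ) : ℝ :=
  Real.sqrt (2 * a) * ∑ k ∈ Finset.range (p + 1),
    ((-1 : ℝ) ^ k * (Nat.factorial p) /
        ((Nat.factorial k) * ((Nat.factorial (p - k)) ^ 2)) *
      (2 * a * t) ^ (p - k) * Real.exp (-a * t))

noncomputable def lagCoeff (a : ℝ) (p k : ℕ) : ℝ :=
  (-1 : ℝ) ^ (p - k) * (Nat.factorial p) * (2 * a) ^ ((k : ℝ) + 1 / 2) /
    ((Nat.factorial k) * (Nat.factorial (p - k)))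

open intervalIntegral
lemma integral_pow_mul_exp (c : ℂ) (hc : c ≠ 0) : ∀ (n : ℕ) (t : ℝ),
    ∫ τ in (0:ℝ)..t, (τ:ℂ)^n * Complex.exp (c * τ) =
      Complex.exp (c*t) * (∑ i ∈ Finset.range (n+1),
        (-1:ℂ)^i * ((n.factorial : ℂ) / ((n-i).factorial : ℂ)) * (t:ℂ)^(n-i) / c^(i+1))
      - (-1:ℂ)^n * (n.factorial : ℂ) / c^(n+1) := by
  intro n
  induction n with
  | zero =>
    intro t
    simp only [pow_zero, one_mul, Nat.factorial_zero]
    rw [integral_exp_mul_complex hc]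
    simp [Finset.sum_range_one]
    field_simp
  | succ n ih =>
    intro t
    have hu : ∀ x ∈ Set.uIcc (0:ℝ) t, HasDerivAt (fun x:ℝ => ((x:ℝ):ℂ)^(n+1))
        (((n+1:ℕ):ℂ) * (x:ℂ)^n) x := by
      intro x _
      have := (hasDerivAt_pow (n+1) ((x:ℝ):ℂ)).comp_ofReal
      simpa using this
    have hv : ∀ x ∈ Set.uIcc (0:ℝ) t, HasDerivAt (fun x:ℝ => Complex.exp (c * x) / c)
        (Complex.exp (c * x)) x := by
      intro x _
      have h1 : HasDerivAt (fun z:ℂ => Complex.exp (c * z) / c) (Complex.exp (c * x)) (x:ℂ) := by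
        have := (((hasDerivAt_id ((x:ℝ):ℂ)).const_mul c).cexp).div_const c
        simpa [mul_comm, mul_div_assoc, mul_div_cancel_left₀ _ hc] using this
      exact h1.comp_ofReal
    have hiu : IntervalIntegrable (fun x:ℝ => ((n+1:ℕ):ℂ) * (x:ℂ)^n) volume 0 t := by
      apply Continuous.intervalIntegrable; fun_prop
    have hiv : IntervalIntegrable (fun x:ℝ => Complex.exp (c * x)) volume 0 t := by
      apply Continuous.intervalIntegrable; fun_prop
    have IBP := intervalIntegral.integral_mul_deriv_eq_deriv_mul hu hv hiu hiv
    simp only [Complex.ofReal_zero] at IBP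
    rw [IBP]
    have key : ∫ x in (0:ℝ)..t, ((n+1:ℕ):ℂ) * (x:ℂ)^n * (Complex.exp (c * x) / c)
        = ((n+1:ℕ):ℂ)/c * ∫ x in (0:ℝ)..t, (x:ℂ)^n * Complex.exp (c * x) := by
      rw [← intervalIntegral.integral_const_mul]
      congr 1; ext x; ring
    rw [key, ih]
    -- now pure algebra with sums
    rw [Finset.sum_range_succ' (n := n+1)]
    have hstep : ∀ i ∈ Finset.range (n+1),
        (-1:ℂ)^(i+1) * (((n+1).factorial : ℂ) / ((n+1-(i+1)).factorial : ℂ)) * (t:ℂ)^(n+1-(i+1)) / c^(i+1+1)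
        = (-(((n+1:ℕ):ℂ))/c) * ((-1:ℂ)^i * ((n.factorial : ℂ) / ((n-i).factorial : ℂ)) * (t:ℂ)^(n-i) / c^(i+1)) := by
      intro i hi
      have h1 : n+1-(i+1) = n - i := by omega
      rw [h1, Nat.factorial_succ]
      push_cast
      field_simp
      ring
    rw [Finset.sum_congr rfl hstep, ← Finset.mul_sum]
    have hf0 : ((n+1).factorial : ℂ) ≠ 0 := by exact_mod_cast (n+1).factorial_ne_zero
    generalize (∑ i ∈ Finset.range (n+1),
        (-1:ℂ)^i * ((n.factorial : ℂ) / ((n-i).factorial : ℂ)) * (t:ℂ)^(n-i) / c^(i+1)) = S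
    simp only [pow_zero, one_mul, Nat.sub_zero, Complex.ofReal_zero, mul_zero, zero_mul,
      sub_zero, mul_one, div_self hf0]
    rw [zero_pow (Nat.succ_ne_zero n), zero_mul, sub_zero, Nat.factorial_succ]
    push_cast
    field_simp
    ring

lemma triangle_sum {M : Type*} [AddCommMonoid M] (g : ℕ → ℕ → M) : ∀ n : ℕ,
    ∑ j ∈ Finset.range n, ∑ i ∈ Finset.range (j+1), g j i
      = ∑ k ∈ Finset.range n, ∑ i ∈ Finset.range (n-k), g (k+i) i := by
  intro n
  induction n with
  | zero => simp
  | succ n ih =>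
    rw [Finset.sum_range_succ, ih]
    have h1 : ∀ k ∈ Finset.range n, ∑ i ∈ Finset.range (n+1-k), g (k+i) i
        = (∑ i ∈ Finset.range (n-k), g (k+i) i) + g n (n-k) := by
      intro k hk
      have hk' : k < n := Finset.mem_range.mp hk
      rw [show n+1-k = (n-k)+1 by omega, Finset.sum_range_succ]
      congr 2
      omega
    conv_rhs => rw [Finset.sum_range_succ, Finset.sum_congr rfl h1, Finset.sum_add_distrib]
    have h2 : ∑ k ∈ Finset.range n, g n (n-k) = ∑ k ∈ Finset.range n, g n (k+1) := by
      rw [← Finset.sum_range_reflect]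
      apply Finset.sum_congr rfl
      intro k hk
      congr 1
      have := Finset.mem_range.mp hk; omega
    rw [h2, show n+1-n = 1 by omega, Finset.sum_range_one,
      Finset.sum_range_succ' (fun i => g n i) n]
    abel

lemma lag_eq (a : ℝ) (ha : 0 < a) (p : ℕ) (τ : ℝ) :
    lag a p τ = ∑ j ∈ Finset.range (p+1),
      lagCoeff a p j / (j.factorial : ℝ) * τ^j * Real.exp (-a*τ) := by
  rw [← Finset.sum_range_reflect]
  simp only [Nat.add_sub_cancel]
  unfold lag lagCoeff
  rw [Finset.mul_sum]
  apply Finset.sum_congr rfl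
  intro k hk
  have hk' : k ≤ p := by have := Finset.mem_range.mp hk; omega
  have h1 : p - (p - k) = k := by omega
  rw [h1]
  have h2 : (2*a) ^ (((p-k:ℕ):ℝ) + 1/2) = (2*a)^(p-k) * Real.sqrt (2*a) := by
    rw [Real.rpow_add (by linarith), Real.rpow_natCast,
      Real.sqrt_eq_rpow]
  rw [h2, mul_pow]
  have hf1 : ((p-k).factorial : ℝ) ≠ 0 := by exact_mod_cast (p-k).factorial_ne_zero
  have hf2 : (k.factorial : ℝ) ≠ 0 := by exact_mod_cast k.factorial_ne_zero
  have hs : Real.sqrt (2*a) ≠ 0 := by positivity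
  field_simp

theorem conv_laguerre_exponential_sum (a : ℝ) (ha : 0 < a) (p : ℕ) (L : ℕ)
    (α lam : Fin L → ℂ) (hdist : Function.Injective lam)
    (hlam : ∀ ℓ, lam ℓ ≠ -(a : ℂ))
    (f : ℝ → ℂ) (hf : ∀ t, f t = ∑ ℓ, α ℓ * Complex.exp (lam ℓ * t))
    (γ : Fin L → ℂ)
    (hγ : ∀ ℓ, γ ℓ = ∑ k ∈ Finset.range (p + 1),
        α ℓ * (lagCoeff a p k : ℂ) / (lam ℓ + a) ^ (k + 1))
    (β : ℕ → ℂ)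
    (hβ : ∀ k, β k = ∑ ℓ, ∑ q ∈ Finset.Icc 1 (p - k + 1),
        (-1 : ℂ) ^ (q - 1) * α ℓ * (lagCoeff a p (k + q - 1) : ℂ) /
          (-(a : ℂ) - lam ℓ) ^ q) :
    ∀ t : ℝ, 0 ≤ t →
      ∫ τ in (0 : ℝ)..t, (lag a p τ : ℂ) * f (t - τ) =
        ∑ k ∈ Finset.range (p + 1),
            β k / (Nat.factorial k) * (t : ℂ) ^ k * Complex.exp (-(a : ℂ) * t) +
          ∑ ℓ, γ ℓ * Complex.exp (lam ℓ * t) := by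
  intro t ht
  have hc : ∀ ℓ, (-(a:ℂ) - lam ℓ) ≠ 0 := by
    intro ℓ h
    exact hlam ℓ (by linear_combination -h)
  -- pointwise expansion of the integrand
  have hEq : ∀ τ : ℝ, (lag a p τ : ℂ) * f (t - τ) =
      ∑ j ∈ Finset.range (p+1), ∑ ℓ,
        ((lagCoeff a p j : ℂ) / (j.factorial : ℂ)) * α ℓ * Complex.exp (lam ℓ * t) *
          ((τ:ℂ)^j * Complex.exp ((-(a:ℂ) - lam ℓ) * τ)) := by
    intro τ
    have hlagC : ((lag a p τ : ℝ):ℂ) = ∑ j ∈ Finset.range (p+1),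
        ((lagCoeff a p j : ℂ) / (j.factorial : ℂ)) * (τ:ℂ)^j * Complex.exp (-(a:ℂ)*τ) := by
      rw [lag_eq a ha p τ]
      push_cast
      apply Finset.sum_congr rfl
      intro j _
      ring_nf
    rw [hlagC, hf, Finset.sum_mul]
    apply Finset.sum_congr rfl
    intro j _
    rw [Finset.mul_sum]
    apply Finset.sum_congr rfl
    intro ℓ _
    have e1 : Complex.exp (-(a:ℂ)*τ) * Complex.exp (lam ℓ * ((t - τ : ℝ):ℂ)) =
        Complex.exp (lam ℓ * t) * Complex.exp ((-(a:ℂ) - lam ℓ) * τ) := by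
      rw [← Complex.exp_add, ← Complex.exp_add]
      congr 1
      push_cast
      ring
    linear_combination ((lagCoeff a p j : ℂ) / (j.factorial : ℂ)) * (τ:ℂ)^j * α ℓ * e1
  -- swap integral and sums, pull out constants
  have hI1 : (∫ τ in (0:ℝ)..t, (lag a p τ : ℂ) * f (t - τ)) =
      ∑ j ∈ Finset.range (p+1), ∑ ℓ,
        ((lagCoeff a p j : ℂ) / (j.factorial : ℂ)) * α ℓ * Complex.exp (lam ℓ * t) *
          (∫ τ in (0:ℝ)..t, (τ:ℂ)^j * Complex.exp ((-(a:ℂ) - lam ℓ) * τ)) := by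
    rw [intervalIntegral.integral_congr (g := fun τ : ℝ =>
      ∑ j ∈ Finset.range (p+1), ∑ ℓ,
        ((lagCoeff a p j : ℂ) / (j.factorial : ℂ)) * α ℓ * Complex.exp (lam ℓ * t) *
          ((τ:ℂ)^j * Complex.exp ((-(a:ℂ) - lam ℓ) * τ))) (fun τ _ => hEq τ)]
    rw [intervalIntegral.integral_finset_sum]
    · apply Finset.sum_congr rfl
      intro j _
      rw [intervalIntegral.integral_finset_sum]
      · apply Finset.sum_congr rfl
        intro ℓ _
        rw [← intervalIntegral.integral_const_mul]
      · intro ℓ _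
        apply Continuous.intervalIntegrable
        fun_prop
    · intro j _
      apply Continuous.intervalIntegrable
      apply continuous_finset_sum
      intro ℓ _
      fun_prop
  rw [hI1]
  -- evaluate the integrals
  have hI2 : ∀ j ∈ Finset.range (p+1), ∀ ℓ ∈ (Finset.univ : Finset (Fin L)),
      ((lagCoeff a p j : ℂ) / (j.factorial : ℂ)) * α ℓ * Complex.exp (lam ℓ * t) *
          (∫ τ in (0:ℝ)..t, (τ:ℂ)^j * Complex.exp ((-(a:ℂ) - lam ℓ) * τ))
      = (∑ i ∈ Finset.range (j+1), α ℓ * (lagCoeff a p j : ℂ) * (-1:ℂ)^i /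
            (((j-i).factorial : ℂ) * (-(a:ℂ) - lam ℓ)^(i+1)) * (t:ℂ)^(j-i) *
            Complex.exp (-(a:ℂ)*t))
        + α ℓ * (lagCoeff a p j : ℂ) / (lam ℓ + a)^(j+1) * Complex.exp (lam ℓ * t) := by
    intro j _ ℓ _
    rw [integral_pow_mul_exp _ (hc ℓ) j t]
    have hcℓ := hc ℓ
    have hfj : ((j.factorial : ℂ)) ≠ 0 := by exact_mod_cast j.factorial_ne_zero
    have hE : Complex.exp (lam ℓ * t) * Complex.exp ((-(a:ℂ) - lam ℓ) * t) =
        Complex.exp (-(a:ℂ)*t) := by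
      rw [← Complex.exp_add]; congr 1; ring
    have hpow : (lam ℓ + (a:ℂ))^(j+1) = (-1:ℂ)^(j+1) * (-(a:ℂ) - lam ℓ)^(j+1) := by
      rw [show lam ℓ + (a:ℂ) = -(-(a:ℂ) - lam ℓ) by ring, neg_pow]
    rw [mul_sub]
    have hsum : (lagCoeff a p j : ℂ) / (j.factorial : ℂ) * α ℓ * Complex.exp (lam ℓ * t) *
        (Complex.exp ((-(a:ℂ) - lam ℓ) * t) * ∑ i ∈ Finset.range (j+1),
          (-1:ℂ)^i * ((j.factorial : ℂ) / (((j-i).factorial : ℂ))) * (t:ℂ)^(j-i) /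
            (-(a:ℂ) - lam ℓ)^(i+1))
        = ∑ i ∈ Finset.range (j+1), α ℓ * (lagCoeff a p j : ℂ) * (-1:ℂ)^i /
            (((j-i).factorial : ℂ) * (-(a:ℂ) - lam ℓ)^(i+1)) * (t:ℂ)^(j-i) *
            Complex.exp (-(a:ℂ)*t) := by
      rw [← hE]
      simp only [Finset.mul_sum]
      apply Finset.sum_congr rfl
      intro i _
      have hfji : (((j-i).factorial : ℂ)) ≠ 0 := by exact_mod_cast (j-i).factorial_ne_zero
      have hcp : (-(a:ℂ) - lam ℓ)^(i+1) ≠ 0 := pow_ne_zero _ hcℓ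
      field_simp
    have hgam : (lagCoeff a p j : ℂ) / (j.factorial : ℂ) * α ℓ * Complex.exp (lam ℓ * t) *
        ((-1:ℂ)^j * (j.factorial : ℂ) / (-(a:ℂ) - lam ℓ)^(j+1))
        = -(α ℓ * (lagCoeff a p j : ℂ) / (lam ℓ + a)^(j+1) * Complex.exp (lam ℓ * t)) := by
      rw [hpow]
      have hcp : (-(a:ℂ) - lam ℓ)^(j+1) ≠ 0 := pow_ne_zero _ hcℓ
      have h2 : ((-1:ℂ))^(j*2) = 1 := by rw [mul_comm, pow_mul]; norm_num
      field_simp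
      ring_nf
      rw [h2]
      ring
    rw [hsum, hgam]
    ring
  rw [Finset.sum_congr rfl (fun j hj => Finset.sum_congr rfl (hI2 j hj))]
  simp only [Finset.sum_add_distrib]
  congr 1
  · -- polynomial part
    rw [show (∑ j ∈ Finset.range (p+1), ∑ ℓ, ∑ i ∈ Finset.range (j+1),
        α ℓ * (lagCoeff a p j : ℂ) * (-1:ℂ)^i /
            (((j-i).factorial : ℂ) * (-(a:ℂ) - lam ℓ)^(i+1)) * (t:ℂ)^(j-i) *
            Complex.exp (-(a:ℂ)*t))
      = ∑ j ∈ Finset.range (p+1), ∑ i ∈ Finset.range (j+1), ∑ ℓ,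
        α ℓ * (lagCoeff a p j : ℂ) * (-1:ℂ)^i /
            (((j-i).factorial : ℂ) * (-(a:ℂ) - lam ℓ)^(i+1)) * (t:ℂ)^(j-i) *
            Complex.exp (-(a:ℂ)*t)
      from Finset.sum_congr rfl (fun j _ => Finset.sum_comm)]
    rw [triangle_sum (fun j i => ∑ ℓ,
        α ℓ * (lagCoeff a p j : ℂ) * (-1:ℂ)^i /
            (((j-i).factorial : ℂ) * (-(a:ℂ) - lam ℓ)^(i+1)) * (t:ℂ)^(j-i) *
            Complex.exp (-(a:ℂ)*t)) (p+1)]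
    apply Finset.sum_congr rfl
    intro k hk
    have hkp : k ≤ p := by have := Finset.mem_range.mp hk; omega
    rw [hβ k, show p+1-k = p-k+1 by omega]
    have hIcc : ∀ ℓ : Fin L, ∑ q ∈ Finset.Icc 1 (p - k + 1),
        (-1 : ℂ) ^ (q - 1) * α ℓ * (lagCoeff a p (k + q - 1) : ℂ) /
          (-(a:ℂ) - lam ℓ) ^ q
        = ∑ i ∈ Finset.range (p - k + 1),
        (-1 : ℂ) ^ ((1+i) - 1) * α ℓ * (lagCoeff a p (k + (1+i) - 1) : ℂ) /
          (-(a:ℂ) - lam ℓ) ^ (1+i) := by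
      intro ℓ
      rw [← Finset.Ico_add_one_right_eq_Icc, Finset.sum_Ico_eq_sum_range]
      simp
    rw [Finset.sum_congr rfl (fun ℓ _ => hIcc ℓ)]
    rw [Finset.sum_comm (s := Finset.univ) (t := Finset.range (p-k+1))]
    rw [Finset.sum_div, Finset.sum_mul, Finset.sum_mul]
    apply Finset.sum_congr rfl
    intro i _
    rw [Finset.sum_div, Finset.sum_mul, Finset.sum_mul]
    apply Finset.sum_congr rfl
    intro ℓ _
    have h1 : k + i - i = k := by omega
    have h2 : (1+i) - 1 = i := by omega
    have h3 : k + (1+i) - 1 = k + i := by omega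
    rw [h1, h2, h3]
    have hfk : ((k.factorial : ℂ)) ≠ 0 := by exact_mod_cast k.factorial_ne_zero
    have hcp : (-(a:ℂ) - lam ℓ)^(1+i) ≠ 0 := pow_ne_zero _ (hc ℓ)
    rw [show (1:ℕ)+i = i+1 by omega] at hcp ⊢
    field_simp
  · -- exponential part
    rw [Finset.sum_comm]
    apply Finset.sum_congr rfl
    intro ℓ _
    rw [hγ ℓ, Finset.sum_mul]
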